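/- (Bound on μ(z).) Let C = [[a,b],[c,d]] ∈ U(2) with abcd ≠ 0, Δ = ad − bc, λ(z) as defined, and r_0 ∈ (0,1) such that |λ(z)| < 1 for 0 < |z| < r_0. Set μ(z) = (dλ(z) − Δz)z/c. Then |μ(z)| < 1 for all z with 0 < |z| < min(|c|, r_0). -/

import Mathlib

/-!
Put `w = d z λ(z)`, `p = Δ z²`, `α = |a|²` and `γ = |c|² = 1 - α`. By construction `w` is a root of
`X² - (p + 1) X + α p`, that is `w (w - 1) = p (w - α)` and `(w - p)(w - α) = γ w`. Since
`c μ(z) = w - p`, the bound is equivalent to `γ |w|² < |w - α|²`, and by the Apollonius identity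
`|w - α|² = γ |w|² + α (|w - 1|² - γ)` to `|w - 1|² > γ`.
Taking norms in the first relation and eliminating `|w - α|²` gives
`(|w - 1|² - γ)(|w|² - α |p|²) = -γ |w|² (1 - |p|²)`, which is negative as `|p| = |z|² < 1`.
The hypothesis `|λ(z)| < 1` means `|w|² < α |p|`, which forces `|w|² < α |p|²`,
so the first factor is positive.
-/

noncomputable section

namespace QW

/-- `λ(z) = (Δz² + 1 - √(Δ²z⁴ + 2Δ(1-2|a|²)z² + 1)) / (2dz)`, where the square
root is the principal branch (continuous near `1` with `√1 = 1`). -/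
def lam (a d Δ : ℂ) (z : ℂ) : ℂ :=
  (Δ * z ^ 2 + 1 -
      (Δ ^ 2 * z ^ 4 + 2 * Δ * (1 - 2 * (‖a‖ : ℂ) ^ 2) * z ^ 2 + 1) ^ ((1 : ℂ) / 2)) /
    (2 * d * z)

/-- `μ(z) = (dλ(z) - Δz)z/c`. -/
def mu (a c d Δ : ℂ) (z : ℂ) : ℂ := (d * lam a d Δ z - Δ * z) * z / c

open Matrix in
theorem norm_entries_of_mem_unitaryGroup_fin_two {a b c d : ℂ}
    (hU : !![a, b; c, d] ∈ unitaryGroup (Fin 2) ℂ) :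
    ‖a‖ ^ 2 + ‖c‖ ^ 2 = 1 ∧ ‖c‖ ^ 2 + ‖d‖ ^ 2 = 1 ∧ ‖a * d - b * c‖ = 1 := by
  have hcol := congrFun (congrFun (mem_unitaryGroup_iff'.mp hU) 0) 0
  have hrow := congrFun (congrFun (mem_unitaryGroup_iff.mp hU) 1) 1
  simp [mul_apply, Fin.sum_univ_two, star_eq_conjTranspose, Complex.conj_mul',
    Complex.mul_conj'] at hcol hrow
  have hdet : ‖a * d - b * c‖ = 1 := by
    rw [← det_fin_two_of]
    exact CStarRing.norm_of_mem_unitary (det_of_mem_unitary hU)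
  exact ⟨by exact_mod_cast hcol, by exact_mod_cast hrow, hdet⟩

theorem lam_quadratic_eq_zero (a d Δ : ℂ) {z : ℂ} (hd : d ≠ 0) (hz : z ≠ 0) :
    (d * z * lam a d Δ z) ^ 2 - (Δ * z ^ 2 + 1) * (d * z * lam a d Δ z)
      + (‖a‖ : ℂ) ^ 2 * Δ * z ^ 2 = 0 := by
  set D := Δ ^ 2 * z ^ 4 + 2 * Δ * (1 - 2 * (‖a‖ : ℂ) ^ 2) * z ^ 2 + 1
  have hsqrt : (D ^ ((1 : ℂ) / 2)) ^ 2 = D := by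
    rw [one_div]
    exact_mod_cast Complex.cpow_nat_inv_pow D two_ne_zero
  have hw : d * z * lam a d Δ z = (Δ * z ^ 2 + 1 - D ^ ((1 : ℂ) / 2)) / 2 := by
    rw [lam, mul_div_assoc', div_eq_div_iff (by simp [hd, hz]) two_ne_zero]
    ring
  rw [hw]
  linear_combination hsqrt / 4

theorem norm_sub_ofReal_sq_of_add_eq_one (w : ℂ) {α γ : ℝ} (h : α + γ = 1) :
    ‖w - α‖ ^ 2 = γ * ‖w‖ ^ 2 + α * (‖w - 1‖ ^ 2 - γ) := by
  obtain rfl : γ = 1 - α := by linarith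
  simp only [Complex.sq_norm, Complex.normSq_apply, Complex.sub_re, Complex.sub_im,
    Complex.ofReal_re, Complex.ofReal_im, Complex.one_re, Complex.one_im]
  ring

theorem norm_sq_lt_norm_sub_ofReal_sq {α γ : ℝ} {w p : ℂ} (hαγ : α + γ = 1) (hγ : 0 < γ)
    (hp : ‖p‖ < 1) (hw : ‖w‖ ^ 2 < α * ‖p‖) (hrel : w * (w - 1) = p * (w - α)) :
    γ * ‖w‖ ^ 2 < ‖w - α‖ ^ 2 := by
  have hαp : 0 < α * ‖p‖ := (sq_nonneg _).trans_lt hw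
  have hα : 0 < α := pos_of_mul_pos_left hαp (norm_nonneg p)
  have hp0 : 0 < ‖p‖ := pos_of_mul_pos_right hαp hα.le
  have hw0 : w ≠ 0 := by
    rintro rfl
    have : p = 0 := by simpa [hα.ne'] using hrel
    simp [this] at hp0
  have hnorm : ‖w‖ ^ 2 * ‖w - 1‖ ^ 2 = ‖p‖ ^ 2 * ‖w - α‖ ^ 2 := by
    rw [← mul_pow, ← mul_pow, ← norm_mul, ← norm_mul, hrel]
  rw [norm_sub_ofReal_sq_of_add_eq_one w hαγ] at hnorm ⊢
  set S := ‖w - 1‖ ^ 2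
  set ρ := ‖w‖ ^ 2
  set q := ‖p‖
  have hρ : 0 < ρ := by positivity
  have hρα : ρ < α := hw.trans (mul_lt_of_lt_one_right hα hp)
  have hS : S * (ρ - α * q ^ 2) = γ * q ^ 2 * (ρ - α) := by linear_combination hnorm
  have hsmall : ρ - α * q ^ 2 < 0 :=
    neg_of_mul_neg_right (hS ▸ mul_neg_of_pos_of_neg (mul_pos hγ (pow_pos hp0 2))
      (sub_neg.mpr hρα)) (sq_nonneg _)
  have hprod : (S - γ) * (ρ - α * q ^ 2) < 0 := by
    have hq : 0 < 1 - q ^ 2 := by nlinarith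
    have : (S - γ) * (ρ - α * q ^ 2) = -(γ * ρ * (1 - q ^ 2)) := by linear_combination hS
    rw [this, neg_neg_iff_pos]
    positivity
  have hSγ : 0 < S - γ := pos_of_mul_neg_left hprod hsmall.le
  exact lt_add_of_pos_right _ (mul_pos hα hSγ)

theorem norm_sq_lt_of_mul_eq_ofReal_mul {γ : ℝ} {u v w : ℂ} (hγ : 0 < γ)
    (h : u * v = γ * w) (hv : γ * ‖w‖ ^ 2 < ‖v‖ ^ 2) : ‖u‖ ^ 2 < γ := by
  have hv0 : 0 < ‖v‖ ^ 2 := lt_of_le_of_lt (by positivity) hv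
  have huv : ‖u‖ ^ 2 * ‖v‖ ^ 2 = γ * (γ * ‖w‖ ^ 2) := by
    rw [← mul_pow, ← norm_mul, h, norm_mul, Complex.norm_real, Real.norm_of_nonneg hγ.le]
    ring
  exact lt_of_mul_lt_mul_right (huv ▸ mul_lt_mul_of_pos_left hv hγ) hv0.le

theorem mu_bound_general (a b c d : ℂ)
    (hU : !![a, b; c, d] ∈ Matrix.unitaryGroup (Fin 2) ℂ) (h0 : a * b * c * d ≠ 0)
    (r0 : ℝ)
    (hlam : ∀ z : ℂ, 0 < ‖z‖ → ‖z‖ < r0 →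
      ‖lam a d (a * d - b * c) z‖ < 1) :
    ∀ z : ℂ, 0 < ‖z‖ → ‖z‖ < min ‖c‖ r0 →
      ‖mu a c d (a * d - b * c) z‖ < 1 := by
  obtain ⟨hac, hcd, hΔ⟩ := norm_entries_of_mem_unitaryGroup_fin_two hU
  have hd : d ≠ 0 := right_ne_zero_of_mul h0
  have hda : ‖d‖ = ‖a‖ := (sq_eq_sq₀ (norm_nonneg _) (norm_nonneg _)).mp (by linarith)
  intro z hz hzcr
  obtain ⟨hzc, hzr⟩ := lt_min_iff.mp hzcr
  set Δ := a * d - b * c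
  set w := d * z * lam a d Δ z
  have hc0 : 0 < ‖c‖ := hz.trans hzc
  have hc : 0 < ‖c‖ ^ 2 := pow_pos hc0 2
  have hp : ‖Δ * z ^ 2‖ < 1 := by
    rw [norm_mul, hΔ, one_mul, norm_pow]
    nlinarith
  have hw : ‖w‖ ^ 2 < ‖a‖ ^ 2 * ‖Δ * z ^ 2‖ := by
    have hwz : ‖w‖ < ‖d‖ * ‖z‖ := by
      rw [norm_mul, norm_mul]
      exact mul_lt_of_lt_one_right (mul_pos (norm_pos_iff.mpr hd) hz) (hlam z hz hzr)
    rw [norm_mul Δ, hΔ, one_mul, norm_pow, ← hda, ← mul_pow]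
    exact pow_lt_pow_left₀ hwz (norm_nonneg _) two_ne_zero
  have hroot := lam_quadratic_eq_zero a d Δ hd (norm_pos_iff.mp hz)
  have hacC : (‖a‖ : ℂ) ^ 2 + (‖c‖ : ℂ) ^ 2 = 1 := by exact_mod_cast hac
  have hwα := norm_sq_lt_norm_sub_ofReal_sq hac hc hp hw
    (by push_cast; linear_combination hroot)
  have hμ := norm_sq_lt_of_mul_eq_ofReal_mul (u := w - Δ * z ^ 2) hc
    (by push_cast; linear_combination hroot - w * hacC) hwα
  have hmu : mu a c d Δ z = (w - Δ * z ^ 2) / c := by rw [mu]; ring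
  rw [hmu, norm_div, div_lt_one hc0]
  exact (pow_lt_pow_iff_left₀ (norm_nonneg _) (norm_nonneg _) two_ne_zero).mp hμ

/-- **Bound on `μ(z)`.** -/
theorem mu_bound (a b c d : ℂ)
    (hU : !![a, b; c, d] ∈ Matrix.unitaryGroup (Fin 2) ℂ) (h0 : a * b * c * d ≠ 0)
    (r0 : ℝ) (hr0 : r0 ∈ Set.Ioo (0 : ℝ) 1)
    (hlam : ∀ z : ℂ, 0 < ‖z‖ → ‖z‖ < r0 →
      ‖lam a d (a * d - b * c) z‖ < 1) :
    ∀ z : ℂ, 0 < ‖z‖ → ‖z‖ < min ‖c‖ r0 →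
      ‖mu a c d (a * d - b * c) z‖ < 1 :=
  mu_bound_general a b c d hU h0 r0 hlam

end QW
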